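/- (Correctness of normalization rule NF2.) Let D̂, C and B be ALC concepts and let A be a concept name occurring in none of D̂, C, B. (i) Every crisp interpretation J satisfying both D̂ ⊑ A and A⊓C ⊑ B also satisfies D̂⊓C ⊑ B. (ii) For every crisp interpretation I satisfying D̂⊓C ⊑ B there exists a crisp interpretation J with the same domain, interpreting every concept name other than A and every role name the same as I, that satisfies both D̂ ⊑ A and A⊓C ⊑ B. -/
import Mathlib


/-- ALC concepts over concept names `NC` and role names `NR`. -/
inductive ALCConcept (NC NR : Type) : Type
  | top : ALCConcept NC NR
  | bot : ALCConcept NC NR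
  | atom (A : NC) : ALCConcept NC NR
  | neg (C : ALCConcept NC NR) : ALCConcept NC NR
  | conj (C D : ALCConcept NC NR) : ALCConcept NC NR
  | disj (C D : ALCConcept NC NR) : ALCConcept NC NR
  | ex (r : NR) (C : ALCConcept NC NR) : ALCConcept NC NR
  | all (r : NR) (C : ALCConcept NC NR) : ALCConcept NC NR

namespace ALCConcept

/-- The set of concept names occurring in a concept. -/
def conceptNames {NC NR : Type} : ALCConcept NC NR → Set NC
  | top => ∅
  | bot => ∅
  | atom A => {A}
  | neg C => C.conceptNames
  | conj C D => C.conceptNames ∪ D.conceptNames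
  | disj C D => C.conceptNames ∪ D.conceptNames
  | ex _ C => C.conceptNames
  | all _ C => C.conceptNames

/-- The set of role names occurring in a concept. -/
def roleNames {NC NR : Type} : ALCConcept NC NR → Set NR
  | top => ∅
  | bot => ∅
  | atom _ => ∅
  | neg C => C.roleNames
  | conj C D => C.roleNames ∪ D.roleNames
  | disj C D => C.roleNames ∪ D.roleNames
  | ex r C => insert r C.roleNames
  | all r C => insert r C.roleNames

end ALCConcept

/-- A crisp interpretation with domain `Δ`. -/
structure Interp (NC NR Δ : Type) : Type where
  atom : NC → Set Δ
  role : NR → Set (Δ × Δ)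

/-- Extension of a crisp interpretation to all ALC concepts. -/
def Interp.eval {NC NR Δ : Type} (I : Interp NC NR Δ) : ALCConcept NC NR → Set Δ
  | .top => Set.univ
  | .bot => ∅
  | .atom A => I.atom A
  | .neg C => (I.eval C)ᶜ
  | .conj C D => I.eval C ∩ I.eval D
  | .disj C D => I.eval C ∪ I.eval D
  | .ex r C => {a | ∃ b, (a, b) ∈ I.role r ∧ b ∈ I.eval C}
  | .all r C => {a | ∀ b, (a, b) ∈ I.role r → b ∈ I.eval C}

/-- The concept inclusion `C ⊑ D` is true in (satisfied by) `I`. -/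
def Interp.satInclusion {NC NR Δ : Type} (I : Interp NC NR Δ)
    (C D : ALCConcept NC NR) : Prop :=
  I.eval C ⊆ I.eval D

theorem eval_congr {NC NR Δ : Type} (I J : Interp NC NR Δ)
    (E : ALCConcept NC NR)
    (ha : ∀ A ∈ E.conceptNames, J.atom A = I.atom A)
    (hr : ∀ r : NR, J.role r = I.role r) :
    J.eval E = I.eval E := by
  induction E with
  | top => rfl
  | bot => rfl
  | atom A => exact ha A rfl
  | neg C ih => simp only [Interp.eval, ih ha]
  | conj C D ihC ihD =>
      simp only [Interp.eval,
        ihC (fun A h => ha A (Or.inl h)), ihD (fun A h => ha A (Or.inr h))]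
  | disj C D ihC ihD =>
      simp only [Interp.eval,
        ihC (fun A h => ha A (Or.inl h)), ihD (fun A h => ha A (Or.inr h))]
  | ex r C ih => simp only [Interp.eval, ih ha, hr]
  | all r C ih => simp only [Interp.eval, ih ha, hr]

/-- correctness of normalization rule NF2,
`D̂ ⊓ C ⊑ B  ⇒  D̂ ⊑ A, A ⊓ C ⊑ B` with `A` fresh. -/
theorem nf2_correct {NC NR Δ : Type} [Nonempty Δ]
    (Dh C B : ALCConcept NC NR) (A : NC)
    (hD : A ∉ Dh.conceptNames) (hC : A ∉ C.conceptNames)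
    (hB : A ∉ B.conceptNames) :
    (∀ J : Interp NC NR Δ,
        J.satInclusion Dh (.atom A) → J.satInclusion (.conj (.atom A) C) B →
          J.satInclusion (.conj Dh C) B) ∧
    (∀ I : Interp NC NR Δ, I.satInclusion (.conj Dh C) B →
        ∃ J : Interp NC NR Δ,
          (∀ B' : NC, B' ≠ A → J.atom B' = I.atom B') ∧
          (∀ r : NR, J.role r = I.role r) ∧
          J.satInclusion Dh (.atom A) ∧ J.satInclusion (.conj (.atom A) C) B) := by
  haveI : DecidableEq NC := Classical.decEq NC
  constructor
  · intro J h1 h2 x hx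
    exact h2 ⟨h1 hx.1, hx.2⟩
  · intro I hI
    refine ⟨⟨fun B' => if B' = A then I.eval Dh else I.atom B', I.role⟩,
      fun B' h => if_neg h, fun r => rfl, ?_, ?_⟩
    all_goals
      have key : ∀ E : ALCConcept NC NR, A ∉ E.conceptNames →
          Interp.eval ⟨fun B' => if B' = A then I.eval Dh else I.atom B', I.role⟩ E
            = I.eval E := by
        intro E hE
        exact eval_congr _ _ E (fun A' h => if_neg (fun he : A' = A => hE (he ▸ h))) (fun _ => rfl)
    · intro x hx
      show x ∈ (if A = A then I.eval Dh else I.atom A)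
      rw [if_pos rfl]
      rwa [key Dh hD] at hx
    · intro x hx
      rw [show Interp.eval _ (.conj (.atom A) C)
          = Interp.eval _ (ALCConcept.atom A) ∩ Interp.eval _ C from rfl,
        key C hC] at hx
      rw [key B hB]
      have hxA : x ∈ (if A = A then I.eval Dh else I.atom A) := hx.1
      rw [if_pos rfl] at hxA
      exact hI ⟨hxA, hx.2⟩
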